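/- arXiv:1612.02158 — 4 statements merged into one kernel-verified Lean document; each statement's English description precedes it below -/
import Mathlib

section
/- Define recursively a family of multihypergraphs H(k,l,m) = (V(k,l,m), E₁(k,l,m) ∪ E₂(k,l,m) ∪ E₃(k,l,m)) for positive integers k,l,m as follows: H(1,1,1) has a single vertex p and one edge {p} in each of E₁, E₂, E₃. If not all of k,l,m equal 1, then V(k,l,m) is the disjoint union of V(k-1,l,m), V(k,l-1,m), V(k,l,m-1) and a new vertex p (using the convention that a hypergraph with an index equal to 0 is empty); E₁(k,l,m) consists of all singletons {v} for v ∈ V(1,l,m) if k = 1, and otherwise of all sets e ∪ {p} for e ∈ E₁(k-1,l,m) together with all edges of E₁(k,l-1,m) and E₁(k,l,m-1); E₂ and E₃ are defined symmetrically (adding p to edges of E₂(k,l-1,m), respectively of E₃(k,l,m-1)). Then for every coloring of V(k,l,m) with three colors c₁, c₂, c₃, there exists an index i ∈ {1,2,3} and an edge e ∈ Eᵢ(k,l,m) all of whose vertices have color cᵢ. -/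
/-- The recursively defined multihypergraph `H(k,l,m)`, with vertices encoded as
lists over `Fin 3` (the branch taken at each recursive step; the new vertex `p` is `[]`).
The first argument is fuel (take `k+l+m`). Returns `(V, E₁, E₂, E₃)`. -/
def HHrec : ℕ → ℕ → ℕ → ℕ →
    Finset (List (Fin 3)) × Finset (Finset (List (Fin 3))) × Finset (Finset (List (Fin 3)))
      × Finset (Finset (List (Fin 3)))
  | 0, _, _, _ => (∅, ∅, ∅, ∅)
  | fuel+1, k, l, m =>
    if k = 0 ∨ l = 0 ∨ m = 0 then (∅, ∅, ∅, ∅)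
    else if k = 1 ∧ l = 1 ∧ m = 1 then ({[]}, {{[]}}, {{[]}}, {{[]}})
    else
      let A := HHrec fuel (k-1) l m
      let B := HHrec fuel k (l-1) m
      let C := HHrec fuel k l (m-1)
      let V : Finset (List (Fin 3)) :=
        A.1.image (List.cons 0) ∪ B.1.image (List.cons 1) ∪ C.1.image (List.cons 2)
          ∪ {([] : List (Fin 3))}
      let E1 : Finset (Finset (List (Fin 3))) :=
        if k = 1 then V.image (fun v => ({v} : Finset (List (Fin 3))))
        else A.2.1.image (fun e => insert ([] : List (Fin 3)) (e.image (List.cons 0)))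
          ∪ B.2.1.image (fun e => e.image (List.cons 1))
          ∪ C.2.1.image (fun e => e.image (List.cons 2))
      let E2 : Finset (Finset (List (Fin 3))) :=
        if l = 1 then V.image (fun v => ({v} : Finset (List (Fin 3))))
        else B.2.2.1.image (fun e => insert ([] : List (Fin 3)) (e.image (List.cons 1)))
          ∪ A.2.2.1.image (fun e => e.image (List.cons 0))
          ∪ C.2.2.1.image (fun e => e.image (List.cons 2))
      let E3 : Finset (Finset (List (Fin 3))) :=
        if m = 1 then V.image (fun v => ({v} : Finset (List (Fin 3))))
        else C.2.2.2.image (fun e => insert ([] : List (Fin 3)) (e.image (List.cons 2)))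
          ∪ A.2.2.2.image (fun e => e.image (List.cons 0))
          ∪ B.2.2.2.image (fun e => e.image (List.cons 1))
      (V, E1, E2, E3)

/-- Vertex set of `H(k,l,m)`. -/
def HV (k l m : ℕ) : Finset (List (Fin 3)) := (HHrec (k+l+m) k l m).1

/-- Edge family `E₁(k,l,m)` (edges of size `k`). -/
def HE1 (k l m : ℕ) : Finset (Finset (List (Fin 3))) := (HHrec (k+l+m) k l m).2.1

/-- Edge family `E₂(k,l,m)` (edges of size `l`). -/
def HE2 (k l m : ℕ) : Finset (Finset (List (Fin 3))) := (HHrec (k+l+m) k l m).2.2.1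

/-- Edge family `E₃(k,l,m)` (edges of size `m`). -/
def HE3 (k l m : ℕ) : Finset (Finset (List (Fin 3))) := (HHrec (k+l+m) k l m).2.2.2

/-- The three edge families indexed by `Fin 3`. -/
def HE (k l m : ℕ) : Fin 3 → Finset (Finset (List (Fin 3))) := ![HE1 k l m, HE2 k l m, HE3 k l m]

/-!
Induction on `k + l + m`. Let `b` be the colour of the new vertex `p`. If the `b`-th index is `1`,
then `{p}` is an edge of `E_b` of colour `b`. Otherwise the sub-hypergraph obtained by decreasing the
`b`-th index has, for the restricted colouring, an edge `e ∈ E_i` of colour `i`. If `i = b`, then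
`e ∪ {p} ∈ E_b` has colour `b`; if `i ≠ b`, then `e` itself is an edge of `E_i`, directly by the
recursion when the `i`-th index is at least `2`, and as a singleton of a vertex when it is `1`.
-/

lemma sum_sub_single_lt {ι : Type*} [Fintype ι] [DecidableEq ι] {n : ι → ℕ} {i : ι}
    (hi : 1 ≤ n i) : ∑ j, (n - Pi.single i 1 : ι → ℕ) j < ∑ j, n j :=
  Finset.sum_lt_sum (fun j _ => Nat.sub_le _ _) ⟨i, Finset.mem_univ i, by simp; omega⟩

lemma one_le_sub_single {ι : Type*} [DecidableEq ι] {n : ι → ℕ} (hn : ∀ j, 1 ≤ n j) {i : ι}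
    (hi : 2 ≤ n i) (j : ι) : 1 ≤ (n - Pi.single i 1 : ι → ℕ) j := by
  rcases eq_or_ne j i with rfl | hji
  · simp; omega
  · simpa [hji] using hn j

lemma HHrec_fuel {n k l m : ℕ} (h : n = k + l + m) : HHrec n k l m = HHrec (k + l + m) k l m := by
  rw [h]

lemma HV_eq {k l m : ℕ} (hk : 1 ≤ k) (hl : 1 ≤ l) (hm : 1 ≤ m) (h : ¬(k = 1 ∧ l = 1 ∧ m = 1)) :
    HV k l m = (HV (k-1) l m).image (List.cons 0) ∪ (HV k (l-1) m).image (List.cons 1)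
      ∪ (HV k l (m-1)).image (List.cons 2) ∪ {[]} := by
  obtain ⟨n, hn⟩ : ∃ n, k + l + m = n + 1 := ⟨k+l+m-1, by omega⟩
  rw [HV, hn, HHrec, if_neg (by omega), if_neg h]
  simp only [HV]
  rw [HHrec_fuel (k := k-1), HHrec_fuel (l := l-1), HHrec_fuel (m := m-1)] <;> omega

lemma HE1_of_eq_one {l m : ℕ} (hl : 1 ≤ l) (hm : 1 ≤ m) :
    HE1 1 l m = (HV 1 l m).image singleton := by
  by_cases h : l = 1 ∧ m = 1
  · obtain ⟨rfl, rfl⟩ := h; rfl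
  obtain ⟨n, hn⟩ : ∃ n, 1 + l + m = n + 1 := ⟨l+m, by omega⟩
  rw [HE1, HV, hn, HHrec, if_neg (by omega), if_neg (by omega)]
  simp only [if_true]

lemma HE2_of_eq_one {k m : ℕ} (hk : 1 ≤ k) (hm : 1 ≤ m) :
    HE2 k 1 m = (HV k 1 m).image singleton := by
  by_cases h : k = 1 ∧ m = 1
  · obtain ⟨rfl, rfl⟩ := h; rfl
  obtain ⟨n, hn⟩ : ∃ n, k + 1 + m = n + 1 := ⟨k+m, by omega⟩
  rw [HE2, HV, hn, HHrec, if_neg (by omega), if_neg (by omega)]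
  simp only [if_true]

lemma HE3_of_eq_one {k l : ℕ} (hk : 1 ≤ k) (hl : 1 ≤ l) :
    HE3 k l 1 = (HV k l 1).image singleton := by
  by_cases h : k = 1 ∧ l = 1
  · obtain ⟨rfl, rfl⟩ := h; rfl
  obtain ⟨n, hn⟩ : ∃ n, k + l + 1 = n + 1 := ⟨k+l, by omega⟩
  rw [HE3, HV, hn, HHrec, if_neg (by omega), if_neg (by omega)]
  simp only [if_true]

lemma HE1_of_two_le {k l m : ℕ} (hk : 2 ≤ k) (hl : 1 ≤ l) (hm : 1 ≤ m) :
    HE1 k l m = (HE1 (k-1) l m).image (fun e => insert [] (e.image (List.cons 0)))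
      ∪ (HE1 k (l-1) m).image (fun e => e.image (List.cons 1))
      ∪ (HE1 k l (m-1)).image (fun e => e.image (List.cons 2)) := by
  obtain ⟨n, hn⟩ : ∃ n, k + l + m = n + 1 := ⟨k+l+m-1, by omega⟩
  rw [HE1, hn, HHrec, if_neg (by omega), if_neg (by omega)]
  simp only [HE1, if_neg (show k ≠ 1 by omega)]
  rw [HHrec_fuel (k := k-1), HHrec_fuel (l := l-1), HHrec_fuel (m := m-1)] <;> omega

lemma HE2_of_two_le {k l m : ℕ} (hk : 1 ≤ k) (hl : 2 ≤ l) (hm : 1 ≤ m) :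
    HE2 k l m = (HE2 k (l-1) m).image (fun e => insert [] (e.image (List.cons 1)))
      ∪ (HE2 (k-1) l m).image (fun e => e.image (List.cons 0))
      ∪ (HE2 k l (m-1)).image (fun e => e.image (List.cons 2)) := by
  obtain ⟨n, hn⟩ : ∃ n, k + l + m = n + 1 := ⟨k+l+m-1, by omega⟩
  rw [HE2, hn, HHrec, if_neg (by omega), if_neg (by omega)]
  simp only [HE2, if_neg (show l ≠ 1 by omega)]
  rw [HHrec_fuel (k := k-1), HHrec_fuel (l := l-1), HHrec_fuel (m := m-1)] <;> omega

lemma HE3_of_two_le {k l m : ℕ} (hk : 1 ≤ k) (hl : 1 ≤ l) (hm : 2 ≤ m) :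
    HE3 k l m = (HE3 k l (m-1)).image (fun e => insert [] (e.image (List.cons 2)))
      ∪ (HE3 (k-1) l m).image (fun e => e.image (List.cons 0))
      ∪ (HE3 k (l-1) m).image (fun e => e.image (List.cons 1)) := by
  obtain ⟨n, hn⟩ : ∃ n, k + l + m = n + 1 := ⟨k+l+m-1, by omega⟩
  rw [HE3, hn, HHrec, if_neg (by omega), if_neg (by omega)]
  simp only [HE3, if_neg (show m ≠ 1 by omega)]
  rw [HHrec_fuel (k := k-1), HHrec_fuel (l := l-1), HHrec_fuel (m := m-1)] <;> omega

/-- `H(k,l,m)` with its index triple packed into a vector, so that the three coordinates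
can be handled uniformly; `n - Pi.single j 1` decreases the `j`-th index. -/
def HV' (n : Fin 3 → ℕ) : Finset (List (Fin 3)) := HV (n 0) (n 1) (n 2)

def HE' (n : Fin 3 → ℕ) : Fin 3 → Finset (Finset (List (Fin 3))) := HE (n 0) (n 1) (n 2)

section

variable {n : Fin 3 → ℕ}

lemma nil_mem_HV' (hn : ∀ j, 1 ≤ n j) : [] ∈ HV' n := by
  by_cases h : n 0 = 1 ∧ n 1 = 1 ∧ n 2 = 1
  · rw [HV', h.1, h.2.1, h.2.2]; decide
  · rw [HV', HV_eq (hn 0) (hn 1) (hn 2) h]; simp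

lemma cons_mem_HV' (hn : ∀ j, 1 ≤ n j) {j : Fin 3} (hj : 2 ≤ n j) {v : List (Fin 3)}
    (hv : v ∈ HV' (n - Pi.single j 1)) : j :: v ∈ HV' n := by
  have h : ¬(n 0 = 1 ∧ n 1 = 1 ∧ n 2 = 1) := by fin_cases j <;> simp at hj <;> omega
  rw [HV', HV_eq (hn 0) (hn 1) (hn 2) h]
  fin_cases j <;> simp_all [HV']

lemma HE'_of_eq_one (hn : ∀ j, 1 ≤ n j) {i : Fin 3} (hi : n i = 1) :
    HE' n i = (HV' n).image singleton := by
  fin_cases i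
  · change HE1 (n 0) (n 1) (n 2) = _
    rw [HV', show n 0 = 1 from hi]; exact HE1_of_eq_one (hn 1) (hn 2)
  · change HE2 (n 0) (n 1) (n 2) = _
    rw [HV', show n 1 = 1 from hi]; exact HE2_of_eq_one (hn 0) (hn 2)
  · change HE3 (n 0) (n 1) (n 2) = _
    rw [HV', show n 2 = 1 from hi]; exact HE3_of_eq_one (hn 0) (hn 1)

lemma insert_nil_mem_HE' (hn : ∀ j, 1 ≤ n j) {i : Fin 3} (hi : 2 ≤ n i)
    {e : Finset (List (Fin 3))} (he : e ∈ HE' (n - Pi.single i 1) i) :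
    insert [] (e.image (List.cons i)) ∈ HE' n i := by
  obtain rfl | rfl | rfl : i = 0 ∨ i = 1 ∨ i = 2 := by omega
  · rw [HE', HE, Matrix.cons_val_zero, HE1_of_two_le hi (hn 1) (hn 2)]
    simp_all [HE', HE]; grind
  · rw [HE', HE, Matrix.cons_val_one, HE2_of_two_le (hn 0) hi (hn 2)]
    simp_all [HE', HE]; grind
  · rw [HE', HE, Matrix.cons_val_two, HE3_of_two_le (hn 0) (hn 1) hi]
    simp_all [HE', HE]; grind

lemma image_cons_mem_HE' (hn : ∀ j, 1 ≤ n j) {i j : Fin 3} (hij : i ≠ j) (hi : 2 ≤ n i)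
    (hj : 2 ≤ n j) {e : Finset (List (Fin 3))} (he : e ∈ HE' (n - Pi.single j 1) i) :
    e.image (List.cons j) ∈ HE' n i := by
  obtain rfl | rfl | rfl : i = 0 ∨ i = 1 ∨ i = 2 := by omega
  · rw [HE', HE, Matrix.cons_val_zero, HE1_of_two_le hi (hn 1) (hn 2)]
    obtain rfl | rfl : j = 1 ∨ j = 2 := by omega
    all_goals simp_all [HE', HE]; grind
  · rw [HE', HE, Matrix.cons_val_one, HE2_of_two_le (hn 0) hi (hn 2)]
    obtain rfl | rfl : j = 0 ∨ j = 2 := by omega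
    all_goals simp_all [HE', HE]; grind
  · rw [HE', HE, Matrix.cons_val_two, HE3_of_two_le (hn 0) (hn 1) hi]
    obtain rfl | rfl : j = 0 ∨ j = 1 := by omega
    all_goals simp_all [HE', HE]; grind

theorem exists_monochromatic_edge (n : Fin 3 → ℕ) (hn : ∀ j, 1 ≤ n j)
    (χ : List (Fin 3) → Fin 3) : ∃ i, ∃ e ∈ HE' n i, ∀ v ∈ e, χ v = i := by
  obtain ⟨b, hχb⟩ : ∃ b, χ [] = b := ⟨_, rfl⟩
  by_cases hb : n b = 1
  · refine ⟨b, {[]}, ?_, by simpa using hχb⟩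
    rw [HE'_of_eq_one hn hb]
    exact Finset.mem_image_of_mem _ (nil_mem_HV' hn)
  have hb2 : 2 ≤ n b := by have := hn b; omega
  obtain ⟨i, e, he, hχ⟩ := exists_monochromatic_edge (n - Pi.single b 1)
    (one_le_sub_single hn hb2) (fun v => χ (b :: v))
  by_cases hib : i = b
  · subst hib
    refine ⟨i, _, insert_nil_mem_HE' hn hb2 he, ?_⟩
    simpa [hχb] using hχ
  by_cases hi : n i = 1
  · rw [HE'_of_eq_one (one_le_sub_single hn hb2) (by simpa [hib] using hi)] at he
    obtain ⟨v, hv, rfl⟩ := Finset.mem_image.1 he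
    refine ⟨i, {b :: v}, ?_, by simpa using hχ⟩
    rw [HE'_of_eq_one hn hi]
    exact Finset.mem_image_of_mem _ (cons_mem_HV' hn hb2 hv)
  · exact ⟨i, _, image_cons_mem_HE' hn hib (by have := hn i; omega) hb2 he, by simpa using hχ⟩
termination_by ∑ j, n j
decreasing_by exact sum_sub_single_lt (hn b)

end

/-- In every 3-coloring of `H(k,l,m)` with colors `c₁ = 0, c₂ = 1, c₃ = 2`, there is an
index `i` and an edge in `Eᵢ(k,l,m)` all of whose vertices get color `cᵢ`. -/
theorem stmt_0 (k l m : ℕ) (hk : 1 ≤ k) (hl : 1 ≤ l) (hm : 1 ≤ m)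
    (χ : List (Fin 3) → Fin 3) :
    ∃ i : Fin 3, ∃ e ∈ HE k l m i, ∀ v ∈ e, χ v = i :=
  exists_monochromatic_edge ![k, l, m] (by simp [Fin.forall_fin_succ, hk, hl, hm]) χ
end

section
/- For every m ≥ 1, the m-uniform hypergraph H(m,m,m) (defined by the recursion above with k = l = m) has no proper 3-coloring; that is, for every 3-coloring of its vertices some edge is monochromatic. -/
/-!
Induction on `k + l + m`. Let `c` be the colour of the root vertex `[]`. If the `c`-th
parameter is `1`, then `{[]}` is an edge of `E_c` of colour `c`. Otherwise apply the induction
hypothesis to the copy of `H` with the `c`-th parameter decreased (the vertices beginning with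
`c`): it has an edge of some `E_j` all of colour `j`. Its copy is an edge of `E_j` of `H`,
enlarged by the root exactly when `j = c`, so it stays monochromatic.
-/

namespace HHrec

/-- `H(d 0, d 1, d 2)` computed with the given fuel; packing the parameters as `d : Fin 3 → ℕ`
lets the three branches of the recursion be handled uniformly. -/
def verts (fuel : ℕ) (d : Fin 3 → ℕ) : Finset (List (Fin 3)) :=
  (HHrec fuel (d 0) (d 1) (d 2)).1

def edges (fuel : ℕ) (d : Fin 3 → ℕ) : Fin 3 → Finset (Finset (List (Fin 3))) :=
  ![(HHrec fuel (d 0) (d 1) (d 2)).2.1, (HHrec fuel (d 0) (d 1) (d 2)).2.2.1,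
    (HHrec fuel (d 0) (d 1) (d 2)).2.2.2]

variable {fuel : ℕ} {d : Fin 3 → ℕ}

lemma verts_eq_empty_of_eq_zero {i : Fin 3} (hi : d i = 0) : verts fuel d = ∅ := by
  cases fuel <;> fin_cases i <;> simp_all [verts, HHrec]

lemma nil_mem_verts (hd : ∀ i, d i ≠ 0) : [] ∈ verts (fuel + 1) d := by
  have h0 : ¬(d 0 = 0 ∨ d 1 = 0 ∨ d 2 = 0) := by simp [hd]
  rw [verts, HHrec, if_neg h0]
  split_ifs <;> simp

lemma cons_mem_verts (hd : ∀ i, d i ≠ 0) {i : Fin 3} {w : List (Fin 3)}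
    (hw : w ∈ verts fuel (Function.update d i (d i - 1))) : i :: w ∈ verts (fuel + 1) d := by
  have h0 : ¬(d 0 = 0 ∨ d 1 = 0 ∨ d 2 = 0) := by simp [hd]
  by_cases h1 : d 0 = 1 ∧ d 1 = 1 ∧ d 2 = 1
  · have : d i - 1 = 0 := by fin_cases i <;> simp [h1]
    rw [verts_eq_empty_of_eq_zero (i := i) (by simpa using this)] at hw
    simp at hw
  rw [verts, HHrec, if_neg h0, if_neg h1]
  fin_cases i <;> simp_all [verts, -Finset.mem_image, Finset.mem_image_of_mem]

lemma edges_eq_image_singleton {j : Fin 3} (hj : d j = 1) :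
    edges fuel d j = (verts fuel d).image ({·}) := by
  cases fuel with
  | zero => fin_cases j <;> simp [edges, verts, HHrec]
  | succ fuel =>
    by_cases h0 : d 0 = 0 ∨ d 1 = 0 ∨ d 2 = 0
    · fin_cases j <;> simp [edges, verts, HHrec, h0]
    by_cases h1 : d 0 = 1 ∧ d 1 = 1 ∧ d 2 = 1
    · fin_cases j <;> simp [edges, verts, HHrec, h1]
    rw [edges, verts, HHrec, if_neg h0, if_neg h1]
    fin_cases j <;> simp_all

lemma insert_nil_image_cons_mem_edges (hd : ∀ i, d i ≠ 0) {j : Fin 3} (hj : d j ≠ 1)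
    {e : Finset (List (Fin 3))} (he : e ∈ edges fuel (Function.update d j (d j - 1)) j) :
    insert [] (e.image (List.cons j)) ∈ edges (fuel + 1) d j := by
  have h0 : ¬(d 0 = 0 ∨ d 1 = 0 ∨ d 2 = 0) := by simp [hd]
  have h1 : ¬(d 0 = 1 ∧ d 1 = 1 ∧ d 2 = 1) := by fin_cases j <;> simp_all
  rw [edges, HHrec, if_neg h0, if_neg h1]
  fin_cases j <;> simp_all [edges, -Finset.mem_image, Finset.mem_image_of_mem]

lemma image_cons_mem_edges (hd : ∀ i, d i ≠ 0) {i j : Fin 3} (hij : i ≠ j)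
    {e : Finset (List (Fin 3))} (he : e ∈ edges fuel (Function.update d i (d i - 1)) j) :
    e.image (List.cons i) ∈ edges (fuel + 1) d j := by
  by_cases hj : d j = 1
  · rw [edges_eq_image_singleton hj]
    rw [edges_eq_image_singleton (by simpa [Function.update_of_ne hij.symm] using hj)] at he
    obtain ⟨w, hw, rfl⟩ := Finset.mem_image.1 he
    simpa using cons_mem_verts hd hw
  have h0 : ¬(d 0 = 0 ∨ d 1 = 0 ∨ d 2 = 0) := by simp [hd]
  have h1 : ¬(d 0 = 1 ∧ d 1 = 1 ∧ d 2 = 1) := by fin_cases j <;> simp_all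
  rw [edges, HHrec, if_neg h0, if_neg h1]
  fin_cases i <;> fin_cases j <;> simp_all [edges, -Finset.mem_image, Finset.mem_image_of_mem]

theorem exists_monochromatic_edge :
    ∀ (fuel : ℕ) (d : Fin 3 → ℕ), (∀ i, d i ≠ 0) → ∑ i, d i ≤ fuel →
      ∀ χ : List (Fin 3) → Fin 3, ∃ j, ∃ e ∈ edges fuel d j, ∀ v ∈ e, χ v = j
  | 0, d, hd, hfuel, _ =>
    (hd 0 (Finset.sum_eq_zero_iff.1 (Nat.le_zero.1 hfuel) 0 (Finset.mem_univ _))).elim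
  | fuel + 1, d, hd, hfuel, χ => by
    obtain ⟨c, hc⟩ : ∃ c, χ [] = c := ⟨_, rfl⟩
    by_cases hc1 : d c = 1
    · refine ⟨c, {[]}, ?_, by simp [hc]⟩
      rw [edges_eq_image_singleton hc1]
      exact Finset.mem_image_of_mem _ (nil_mem_verts hd)
    have hd' : ∀ i, Function.update d c (d c - 1) i ≠ 0 := by
      intro i
      rcases eq_or_ne i c with rfl | hi
      · have := hd i; simp; omega
      · simp [hi, hd i]
    have hfuel' : ∑ i, Function.update d c (d c - 1) i ≤ fuel := by
      have := hd c
      fin_cases c <;> simp [Fin.sum_univ_three, Function.update_apply] at hfuel this ⊢ <;> omega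
    obtain ⟨j, e, he, hmono⟩ := exists_monochromatic_edge fuel _ hd' hfuel' (χ ∘ List.cons c)
    rcases eq_or_ne j c with rfl | hjc
    · exact ⟨j, _, insert_nil_image_cons_mem_edges hd hc1 he, by simpa [hc] using hmono⟩
    · exact ⟨j, _, image_cons_mem_edges hd hjc.symm he, by simpa using hmono⟩

end HHrec

/-- The `m`-uniform hypergraph `H(m,m,m)` has no proper 3-coloring: for every 3-coloring
of its vertices, some edge is monochromatic. -/
theorem stmt_2 (m : ℕ) (hm : 1 ≤ m) (χ : List (Fin 3) → Fin 3) :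
    ∃ e ∈ HE1 m m m ∪ HE2 m m m ∪ HE3 m m m, ∃ c : Fin 3, ∀ v ∈ e, χ v = c := by
  obtain ⟨j, e, he, hmono⟩ := HHrec.exists_monochromatic_edge (m + m + m) ![m, m, m]
    (fun i => by fin_cases i <;> simp <;> omega) (by simp [Fin.sum_univ_three]) χ
  refine ⟨e, ?_, j, hmono⟩
  fin_cases j <;> simp_all [HHrec.edges, HE1, HE2, HE3]
end

section
/- Let H = (V, E) be a hypergraph, let c, t be positive integers, and suppose: (i) every edge e ∈ E with |e| ≥ t that is monochromatic under a given c-coloring χ : V → {1,…,c} contains a point of a distinguished set R ⊆ V; (ii) every edge e ∈ E containing at least t points of R of the same χ-color also contains a point of V \ R of that same color. Let χ' be any coloring obtained from χ by changing the color of each vertex of R to some different color (arbitrarily), leaving V \ R unchanged. Then every edge e ∈ E that contains at least c·t points of R is non-monochromatic under χ'. -/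
/-! Among the `c·t` points of `R` in the edge, pigeonhole gives `t` of one original color; by
(ii) the edge also has a point outside `R` of that color. Recoloring changes the first and
keeps the second, so they differ under `χ'`. -/

theorem recolor_ne_of_eq {V α : Type*} {R : Finset V} {χ χ' : V → α}
    (hre : ∀ v ∈ R, χ' v ≠ χ v) (hkeep : ∀ v, v ∉ R → χ' v = χ v) {r v : V}
    (hr : r ∈ R) (hv : v ∉ R) (h : χ r = χ v) : χ' r ≠ χ' v := by
  rw [hkeep v hv, ← h]
  exact hre r hr

theorem stmt_7_general {V : Type*} [DecidableEq V] (E : Finset (Finset V)) (c t : ℕ)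
    (ht : 0 < t) (R : Finset V) (χ χ' : V → Fin c)
    (hii : ∀ e ∈ E, ∀ col : Fin c,
      t ≤ ((e ∩ R).filter (fun v => χ v = col)).card → ∃ v ∈ e, v ∉ R ∧ χ v = col)
    (hre : ∀ v ∈ R, χ' v ≠ χ v) (hkeep : ∀ v, v ∉ R → χ' v = χ v) :
    ∀ e ∈ E, c * t ≤ (e ∩ R).card → ¬ ∃ col : Fin c, ∀ v ∈ e, χ' v = col := by
  rintro e he hcard ⟨col', hmono⟩
  have : Nonempty (Fin c) := ⟨col'⟩
  obtain ⟨col, -, hcol⟩ := Finset.exists_le_card_fiber_of_mul_le_card_of_maps_to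
    (fun _ _ => Finset.mem_univ (χ _)) Finset.univ_nonempty (by simpa using hcard)
  obtain ⟨v, hve, hvR, hvcol⟩ := hii e he col hcol
  obtain ⟨r, hr⟩ := Finset.card_pos.mp (ht.trans_le hcol)
  rw [Finset.mem_filter, Finset.mem_inter] at hr
  obtain ⟨⟨hre', hrR⟩, hrcol⟩ := hr
  exact recolor_ne_of_eq hre hkeep hrR hvR (hrcol.trans hvcol.symm)
    ((hmono r hre').trans (hmono v hve).symm)

/-- The recoloring step of Lemma `main`: if (i) every monochromatic edge with at least `t`
vertices meets `R`, and (ii) every edge with at least `t` points of `R` of one color also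
contains a point of `V \ R` of that color, then after recoloring each vertex of `R` to a
different color (leaving `V \ R` unchanged), every edge containing at least `c·t` points
of `R` is non-monochromatic. -/
theorem stmt_7 {V : Type*} [DecidableEq V] (E : Finset (Finset V)) (c t : ℕ)
    (hc : 0 < c) (ht : 0 < t) (R : Finset V) (χ χ' : V → Fin c)
    (hi : ∀ e ∈ E, t ≤ e.card → (∃ col : Fin c, ∀ v ∈ e, χ v = col) → ∃ r ∈ R, r ∈ e)
    (hii : ∀ e ∈ E, ∀ col : Fin c,
      t ≤ ((e ∩ R).filter (fun v => χ v = col)).card → ∃ v ∈ e, v ∉ R ∧ χ v = col)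
    (hre : ∀ v ∈ R, χ' v ≠ χ v) (hkeep : ∀ v, v ∉ R → χ' v = χ v) :
    ∀ e ∈ E, c * t ≤ (e ∩ R).card → ¬ ∃ col : Fin c, ∀ v ∈ e, χ' v = col :=
  stmt_7_general E c t ht R χ χ' hii hre hkeep
end

section
/- For every convex polygon D and positive integer k, if (A) every finite point set admits a 3-coloring with no monochromatic homothet of D containing ≥ m points, and (B) every homothet of D containing ≥ M points contains, in any such 3-coloring, at least two color classes each with ≥ m points (for suitable M depending on m and D), then every finite point set admits a 3^k-coloring such that every homothet of D containing at least M_k points (for suitable M_k) contains at least 2^k distinct colors. -/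
open scoped Classical

/-- `D'` is a homothetic copy (positive scaling plus translation) of `D`. -/
def IsHomothet (D D' : Set (ℝ × ℝ)) : Prop :=
  ∃ lam : ℝ, 0 < lam ∧ ∃ v : ℝ × ℝ, D' = (fun p => lam • p + v) '' D

/-!
Colour with (A), then recolour every colour class recursively. A colour of the refined
colouring is a word whose first letter is the original colour, so the colours seen inside a
range are at least those coming from two different classes, which are disjoint sets of words.
By (B), a range with many points has two classes with many points each, and by induction
each contributes `2 ^ k` colours.
-/

open Finset

variable {α C : Type*}

def NoMonochromaticRange (R : Set α → Prop) (m : ℕ) (S : Finset α) (χ : α → C) : Prop :=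
  ∀ D, R D → m ≤ #(S.filter (fun p => p ∈ D)) →
    ∃ p ∈ S, ∃ q ∈ S, p ∈ D ∧ q ∈ D ∧ χ p ≠ χ q

def IsPolychromatic [DecidableEq C] (R : Set α → Prop) (M t : ℕ) (S : Finset α) (χ : α → C) :
    Prop :=
  ∀ D, R D → M ≤ #(S.filter (fun p => p ∈ D)) → t ≤ #((S.filter (fun p => p ∈ D)).image χ)

section

variable {R : Set α → Prop} {S : Finset α}

theorem NoMonochromaticRange.mono {m m' : ℕ} {χ : α → C} (h : NoMonochromaticRange R m S χ)
    (hm : m ≤ m') : NoMonochromaticRange R m' S χ :=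
  fun D hD hcard => h D hD (hm.trans hcard)

theorem isPolychromatic_one_one [DecidableEq C] (χ : α → C) : IsPolychromatic R 1 1 S χ :=
  fun _ _ hcard => card_pos.mpr ((card_pos.mp hcard).image χ)

theorem IsPolychromatic.comp [DecidableEq C] {M t : ℕ} {C' : Type*} [DecidableEq C'] {χ : α → C}
    (h : IsPolychromatic R M t S χ) {e : C → C'} (he : e.Injective) :
    IsPolychromatic R M t S (e ∘ χ) := fun D hD hcard => by
  rw [← image_image, card_image_of_injective _ he]
  exact h D hD hcard

end

def refineColoring {k : ℕ} (χ₀ : α → C) (F : C → α → Fin k → C) (p : α) : Fin (k + 1) → C :=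
  Fin.cons (χ₀ p) (F (χ₀ p) p)

section refineColoring

variable {k : ℕ} (χ₀ : α → C) (F : C → α → Fin k → C) (T : Finset α)

theorem refineColoring_zero (p : α) : refineColoring χ₀ F p 0 = χ₀ p :=
  Fin.cons_zero _ _

theorem card_image_refineColoring_filter [DecidableEq C] (c : C) :
    #((T.filter (fun p => χ₀ p = c)).image (refineColoring χ₀ F)) =
      #((T.filter (fun p => χ₀ p = c)).image (F c)) := by
  have himage : (T.filter (fun p => χ₀ p = c)).image (refineColoring χ₀ F) =
      ((T.filter (fun p => χ₀ p = c)).image (F c)).image (Fin.cons c) := by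
    rw [image_image]
    refine image_congr fun p hp => ?_
    simp only [refineColoring, (mem_filter.mp hp).2, Function.comp_apply]
  rw [himage]
  exact card_image_of_injective _ (Fin.cons_right_injective (α := fun _ => C) c)

theorem card_image_filter_add_le_card_image_refineColoring [DecidableEq C] {c₁ c₂ : C}
    (hc : c₁ ≠ c₂) :
    #((T.filter (fun p => χ₀ p = c₁)).image (F c₁)) +
        #((T.filter (fun p => χ₀ p = c₂)).image (F c₂)) ≤
      #(T.image (refineColoring χ₀ F)) := by
  rw [← card_image_refineColoring_filter, ← card_image_refineColoring_filter,
    ← card_union_of_disjoint]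
  · exact card_le_card (union_subset (image_subset_image (filter_subset _ _))
      (image_subset_image (filter_subset _ _)))
  · rw [disjoint_left]
    rintro _ hx₁ hx₂
    obtain ⟨p, hp, rfl⟩ := mem_image.mp hx₁
    obtain ⟨q, hq, hpq⟩ := mem_image.mp hx₂
    have hhead := congrFun hpq 0
    rw [refineColoring_zero, refineColoring_zero, (mem_filter.mp hp).2,
      (mem_filter.mp hq).2] at hhead
    exact hc hhead.symm

end refineColoring

theorem exists_isPolychromatic_of_twoLargeClasses [DecidableEq C] [Nonempty C] {R : Set α → Prop}
    (hA : ∃ m : ℕ, ∀ S : Finset α, ∃ χ : α → C, NoMonochromaticRange R m S χ)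
    (hB : ∀ m : ℕ, ∃ M : ℕ, ∀ (S : Finset α) (χ : α → C), NoMonochromaticRange R m S χ →
      ∀ D, R D → M ≤ #(S.filter (fun p => p ∈ D)) →
        ∃ c₁ c₂ : C, c₁ ≠ c₂ ∧
          m ≤ #((S.filter (fun p => p ∈ D)).filter (fun p => χ p = c₁)) ∧
          m ≤ #((S.filter (fun p => p ∈ D)).filter (fun p => χ p = c₂)))
    (k : ℕ) :
    ∃ Mk : ℕ, ∀ S : Finset α, ∃ χ : α → Fin k → C, IsPolychromatic R Mk (2 ^ k) S χ := by
  obtain ⟨m, hm⟩ := hA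
  induction k with
  | zero => exact ⟨1, fun S => ⟨fun _ _ => Classical.arbitrary C, isPolychromatic_one_one _⟩⟩
  | succ k ih =>
    obtain ⟨Mk, hMk⟩ := ih
    obtain ⟨M, hM⟩ := hB (max m Mk)
    refine ⟨M, fun S => ?_⟩
    obtain ⟨χ₀, hχ₀⟩ := hm S
    choose F hF using fun c : C => hMk (S.filter (fun p => χ₀ p = c))
    refine ⟨refineColoring χ₀ F, fun D hD hcard => ?_⟩
    obtain ⟨c₁, c₂, hc, h₁, h₂⟩ := hM S χ₀ (hχ₀.mono (le_max_left _ _)) D hD hcard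
    have hclass : ∀ c, max m Mk ≤ #((S.filter (fun p => p ∈ D)).filter (fun p => χ₀ p = c)) →
        2 ^ k ≤ #(((S.filter (fun p => p ∈ D)).filter (fun p => χ₀ p = c)).image (F c)) := by
      intro c hlarge
      rw [filter_comm] at hlarge ⊢
      exact hF c D hD ((le_max_right _ _).trans hlarge)
    calc 2 ^ (k + 1) = 2 ^ k + 2 ^ k := by ring
      _ ≤ _ := Nat.add_le_add (hclass c₁ h₁) (hclass c₂ h₂)
      _ ≤ _ := card_image_filter_add_le_card_image_refineColoring χ₀ F _ hc

/-- Iterated recoloring: if (A) every finite point set admits a 3-coloring in which no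
homothet of `D` with at least `m` points is monochromatic, and (B) in any such 3-coloring
every homothet with at least `M` points meets two color classes each with at least `m`
points, then for every `k` there is an `M_k` such that every finite point set admits a
`3^k`-coloring in which every homothet of `D` with at least `M_k` points contains at least
`2^k` distinct colors. -/
theorem stmt_16 (D : Set (ℝ × ℝ))
    (hA : ∃ m : ℕ, ∀ S : Finset (ℝ × ℝ), ∃ χ : ℝ × ℝ → Fin 3,
      ∀ D' : Set (ℝ × ℝ), IsHomothet D D' → m ≤ (S.filter (fun p => p ∈ D')).card →
        ∃ p ∈ S, ∃ q ∈ S, p ∈ D' ∧ q ∈ D' ∧ χ p ≠ χ q)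
    (hB : ∀ m : ℕ, ∃ M : ℕ, ∀ (S : Finset (ℝ × ℝ)) (χ : ℝ × ℝ → Fin 3),
      (∀ D' : Set (ℝ × ℝ), IsHomothet D D' → m ≤ (S.filter (fun p => p ∈ D')).card →
        ∃ p ∈ S, ∃ q ∈ S, p ∈ D' ∧ q ∈ D' ∧ χ p ≠ χ q) →
      ∀ D' : Set (ℝ × ℝ), IsHomothet D D' → M ≤ (S.filter (fun p => p ∈ D')).card →
        ∃ c₁ c₂ : Fin 3, c₁ ≠ c₂ ∧
          m ≤ ((S.filter (fun p => p ∈ D')).filter (fun p => χ p = c₁)).card ∧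
          m ≤ ((S.filter (fun p => p ∈ D')).filter (fun p => χ p = c₂)).card) :
    ∀ k : ℕ, ∃ Mk : ℕ, ∀ S : Finset (ℝ × ℝ), ∃ χ : ℝ × ℝ → Fin (3 ^ k),
      ∀ D' : Set (ℝ × ℝ), IsHomothet D D' → Mk ≤ (S.filter (fun p => p ∈ D')).card →
        2 ^ k ≤ ((S.filter (fun p => p ∈ D')).image χ).card := by
  intro k
  obtain ⟨Mk, hMk⟩ := exists_isPolychromatic_of_twoLargeClasses (R := IsHomothet D) hA hB k
  refine ⟨Mk, fun S => ?_⟩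
  obtain ⟨χ, hχ⟩ := hMk S
  exact ⟨finFunctionFinEquiv ∘ χ, hχ.comp finFunctionFinEquiv.injective⟩
end
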